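/- Let 𝔥 be a right Leibniz algebra and C = k·1 ⊕ 𝔥 the associated rack bialgebra (elements of 𝔥 primitive, x ◁ y = [x,y]). Then the universal enveloping algebra U(C) = T(𝔥)/⟨[x,y] + y.x − x.y : x, y ∈ 𝔥⟩ is isomorphic as a bialgebra to the universal enveloping algebra U(𝔥_Lie) of the Lie algebra 𝔥_Lie := 𝔥 / ⟨[x,x] : x ∈ 𝔥⟩ (quotient by the Leibniz ideal generated by squares). In particular, the ideal ⟨[x,y] + y.x − x.y⟩ contains all squares [x,x]. -/
import Mathlib


open TensorProduct

set_option maxHeartbeats 1000000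

variable (k V : Type) [Field k] [AddCommGroup V] [Module k V]

/-- For a right Leibniz algebra `𝔥`, the universal enveloping algebra of the
associated rack bialgebra `C = k·1 ⊕ 𝔥` is
`U(C) = T(𝔥)/⟨[x,y] + y.x − x.y⟩`, here realised as a `RingQuot`. -/
noncomputable def relLeib (β : V →ₗ[k] V →ₗ[k] V) :
    TensorAlgebra k V → TensorAlgebra k V → Prop :=
  fun s t => ∃ x y : V,
    s = TensorAlgebra.ι k (β x y) + TensorAlgebra.ι k y * TensorAlgebra.ι k x ∧
    t = TensorAlgebra.ι k x * TensorAlgebra.ι k y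

/-- The two-sided Leibniz ideal of `𝔥` generated by the squares `[x,x]`. -/
def leibnizIdeal (β : V →ₗ[k] V →ₗ[k] V) : Submodule k V :=
  sInf {p : Submodule k V |
    (∀ x : V, β x x ∈ p) ∧ ∀ x ∈ p, ∀ y : V, β x y ∈ p ∧ β y x ∈ p}

section Aux

variable {k V}
variable (β : V →ₗ[k] V →ₗ[k] V)

lemma sq_mem (x : V) : β x x ∈ leibnizIdeal k V β :=
  Submodule.mem_sInf.2 fun _ hp => hp.1 x

lemma closed_left {x : V} (hx : x ∈ leibnizIdeal k V β) (y : V) :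
    β x y ∈ leibnizIdeal k V β :=
  Submodule.mem_sInf.2 fun p hp => (hp.2 x (Submodule.mem_sInf.1 hx p hp) y).1

lemma closed_right {x : V} (hx : x ∈ leibnizIdeal k V β) (y : V) :
    β y x ∈ leibnizIdeal k V β :=
  Submodule.mem_sInf.2 fun p hp => (hp.2 x (Submodule.mem_sInf.1 hx p hp) y).2

/-- the canonical generators of `U(C)` -/
noncomputable def genU : V →ₗ[k] RingQuot (relLeib k V β) :=
  (RingQuot.mkAlgHom k (relLeib k V β)).toLinearMap ∘ₗ TensorAlgebra.ι k

lemma genU_apply (x : V) :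
    genU β x = RingQuot.mkAlgHom k (relLeib k V β) (TensorAlgebra.ι k x) := rfl

lemma genU_comm (x y : V) :
    genU β (β x y) = genU β x * genU β y - genU β y * genU β x := by
  have h : RingQuot.mkAlgHom k (relLeib k V β)
      (TensorAlgebra.ι k (β x y) +
        TensorAlgebra.ι k y * TensorAlgebra.ι k x) =
      RingQuot.mkAlgHom k (relLeib k V β)
        (TensorAlgebra.ι k x * TensorAlgebra.ι k y) :=
    RingQuot.mkAlgHom_rel k ⟨x, y, rfl, rfl⟩
  simp only [map_add, map_mul] at h
  simp only [genU_apply]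
  rw [eq_sub_iff_add_eq]
  exact h

lemma genU_sq (x : V) : genU β (β x x) = 0 := by
  rw [genU_comm, sub_self]

lemma ideal_le_ker : leibnizIdeal k V β ≤ LinearMap.ker (genU β) := by
  apply sInf_le
  refine ⟨fun x => ?_, fun x hx y => ?_⟩
  · simpa [LinearMap.mem_ker] using genU_sq β x
  · simp only [LinearMap.mem_ker] at hx ⊢
    constructor <;> rw [genU_comm, hx] <;> simp

/-- the bracket, with the second argument in the quotient -/
noncomputable def innerQ (x : V) :
    (V ⧸ leibnizIdeal k V β) →ₗ[k] V ⧸ leibnizIdeal k V β :=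
  (leibnizIdeal k V β).liftQ ((leibnizIdeal k V β).mkQ ∘ₗ β x)
    (fun y hy => by
      simpa [LinearMap.mem_ker, Submodule.Quotient.mk_eq_zero] using
        closed_right β hy x)

lemma innerQ_mk (x y : V) :
    innerQ β x (Submodule.Quotient.mk y) = Submodule.Quotient.mk (β x y) := by
  simp [innerQ]

/-- the bracket as a linear map into endomorphisms of the quotient -/
noncomputable def betaQaux :
    V →ₗ[k] ((V ⧸ leibnizIdeal k V β) →ₗ[k] V ⧸ leibnizIdeal k V β) where
  toFun := innerQ β
  map_add' x x' := by
    refine LinearMap.ext fun q => ?_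
    obtain ⟨y, rfl⟩ := Submodule.Quotient.mk_surjective _ q
    simp [innerQ_mk]
  map_smul' c x := by
    refine LinearMap.ext fun q => ?_
    obtain ⟨y, rfl⟩ := Submodule.Quotient.mk_surjective _ q
    simp [innerQ_mk]

/-- the induced bracket on `𝔥_Lie = 𝔥/I` -/
noncomputable def betaQ :
    (V ⧸ leibnizIdeal k V β) →ₗ[k] (V ⧸ leibnizIdeal k V β) →ₗ[k]
      V ⧸ leibnizIdeal k V β :=
  (leibnizIdeal k V β).liftQ (betaQaux β) (fun x hx => by
    rw [LinearMap.mem_ker]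
    refine LinearMap.ext fun q => ?_
    obtain ⟨y, rfl⟩ := Submodule.Quotient.mk_surjective _ q
    show innerQ β x (Submodule.Quotient.mk y) = 0
    rw [innerQ_mk, Submodule.Quotient.mk_eq_zero]
    exact closed_left β hx y)

lemma betaQ_mk (x y : V) :
    betaQ β (Submodule.Quotient.mk x) (Submodule.Quotient.mk y) =
      Submodule.Quotient.mk (β x y) := by
  rw [betaQ, Submodule.liftQ_apply]
  exact innerQ_mk β x y

/-- the CBH-type relation defining `U(𝔥_Lie)` -/
abbrev relLie : TensorAlgebra k (V ⧸ leibnizIdeal k V β) →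
    TensorAlgebra k (V ⧸ leibnizIdeal k V β) → Prop :=
  fun s t => ∃ q r : V ⧸ leibnizIdeal k V β,
    s = TensorAlgebra.ι k (betaQ β q r) ∧
    t = TensorAlgebra.ι k q * TensorAlgebra.ι k r -
      TensorAlgebra.ι k r * TensorAlgebra.ι k q

/-- the canonical generators of `U(𝔥_Lie)` -/
noncomputable def genE : (V ⧸ leibnizIdeal k V β) →ₗ[k] RingQuot (relLie β) :=
  (RingQuot.mkAlgHom k (relLie β)).toLinearMap ∘ₗ TensorAlgebra.ι k

lemma genE_apply (q : V ⧸ leibnizIdeal k V β) :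
    genE β q = RingQuot.mkAlgHom k (relLie β) (TensorAlgebra.ι k q) := rfl

lemma genE_comm (q r : V ⧸ leibnizIdeal k V β) :
    genE β (betaQ β q r) = genE β q * genE β r - genE β r * genE β q := by
  have h : RingQuot.mkAlgHom k (relLie β)
      (TensorAlgebra.ι k (betaQ β q r)) =
      RingQuot.mkAlgHom k (relLie β)
        (TensorAlgebra.ι k q * TensorAlgebra.ι k r -
          TensorAlgebra.ι k r * TensorAlgebra.ι k q) :=
    RingQuot.mkAlgHom_rel k ⟨q, r, rfl, rfl⟩
  simpa only [map_sub, map_mul, genE_apply] using h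

/-- forward map on the tensor algebra -/
noncomputable def fwdT : TensorAlgebra k V →ₐ[k] RingQuot (relLie β) :=
  TensorAlgebra.lift k ((genE β) ∘ₗ (leibnizIdeal k V β).mkQ)

lemma fwdT_ι (x : V) :
    fwdT β (TensorAlgebra.ι k x) = genE β (Submodule.Quotient.mk x) := by
  simp [fwdT]

lemma fwdT_rel : ∀ ⦃s t⦄, relLeib k V β s t → fwdT β s = fwdT β t := by
  rintro _ _ ⟨x, y, rfl, rfl⟩
  simp only [map_add, map_mul, fwdT_ι]
  rw [← betaQ_mk, genE_comm]
  abel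

/-- forward algebra morphism `U(C) → U(𝔥_Lie)` -/
noncomputable def fwd : RingQuot (relLeib k V β) →ₐ[k] RingQuot (relLie β) :=
  RingQuot.liftAlgHom k ⟨fwdT β, fwdT_rel β⟩

lemma fwd_gen (x : V) :
    fwd β (RingQuot.mkAlgHom k (relLeib k V β) (TensorAlgebra.ι k x)) =
      RingQuot.mkAlgHom k (relLie β)
        (TensorAlgebra.ι k (Submodule.Quotient.mk x)) := by
  rw [fwd, RingQuot.liftAlgHom_mkAlgHom_apply, fwdT_ι, genE_apply]

/-- backward generator map -/
noncomputable def bwdLin :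
    (V ⧸ leibnizIdeal k V β) →ₗ[k] RingQuot (relLeib k V β) :=
  (leibnizIdeal k V β).liftQ (genU β) (ideal_le_ker β)

lemma bwdLin_mk (x : V) :
    bwdLin β (Submodule.Quotient.mk x) = genU β x := by
  rw [bwdLin, Submodule.liftQ_apply]

/-- backward map on the tensor algebra -/
noncomputable def bwdT :
    TensorAlgebra k (V ⧸ leibnizIdeal k V β) →ₐ[k] RingQuot (relLeib k V β) :=
  TensorAlgebra.lift k (bwdLin β)

lemma bwdT_rel : ∀ ⦃s t⦄, relLie β s t → bwdT β s = bwdT β t := by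
  rintro _ _ ⟨q, r, rfl, rfl⟩
  obtain ⟨x, rfl⟩ := Submodule.Quotient.mk_surjective _ q
  obtain ⟨y, rfl⟩ := Submodule.Quotient.mk_surjective _ r
  simp only [map_sub, map_mul, bwdT, TensorAlgebra.lift_ι_apply, betaQ_mk,
    bwdLin_mk]
  exact genU_comm β x y

/-- backward algebra morphism `U(𝔥_Lie) → U(C)` -/
noncomputable def bwd : RingQuot (relLie β) →ₐ[k] RingQuot (relLeib k V β) :=
  RingQuot.liftAlgHom k ⟨bwdT β, bwdT_rel β⟩

lemma bwd_gen (q : V ⧸ leibnizIdeal k V β) :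
    bwd β (RingQuot.mkAlgHom k (relLie β) (TensorAlgebra.ι k q)) =
      bwdLin β q := by
  rw [bwd, RingQuot.liftAlgHom_mkAlgHom_apply, bwdT, TensorAlgebra.lift_ι_apply]

lemma fwd_bwd : (fwd β).comp (bwd β) = AlgHom.id k _ := by
  apply RingQuot.ringQuot_ext'
  apply TensorAlgebra.hom_ext
  refine LinearMap.ext fun q => ?_
  obtain ⟨x, rfl⟩ := Submodule.Quotient.mk_surjective _ q
  simp only [LinearMap.comp_apply, AlgHom.toLinearMap_apply, AlgHom.comp_apply,
    AlgHom.id_apply]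
  rw [bwd_gen, bwdLin_mk, genU_apply, fwd_gen]

lemma bwd_fwd : (bwd β).comp (fwd β) = AlgHom.id k _ := by
  apply RingQuot.ringQuot_ext'
  apply TensorAlgebra.hom_ext
  refine LinearMap.ext fun x => ?_
  simp only [LinearMap.comp_apply, AlgHom.toLinearMap_apply, AlgHom.comp_apply,
    AlgHom.id_apply]
  rw [fwd_gen, bwd_gen, bwdLin_mk, genU_apply]

/-- the algebra isomorphism `U(C) ≃ U(𝔥_Lie)` -/
noncomputable def equivE : RingQuot (relLeib k V β) ≃ₐ[k] RingQuot (relLie β) :=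
  AlgEquiv.ofAlgHom (fwd β) (bwd β) (fwd_bwd β) (bwd_fwd β)

lemma equivE_apply (u : RingQuot (relLeib k V β)) : equivE β u = fwd β u := rfl

/-- the primitive coproduct generator map on `U(C)` -/
noncomputable def primU : V →ₗ[k]
    (RingQuot (relLeib k V β) ⊗[k] RingQuot (relLeib k V β)) :=
  ((TensorProduct.mk k _ _).flip 1) ∘ₗ genU β +
    (TensorProduct.mk k _ _ 1) ∘ₗ genU β

lemma primU_apply (x : V) :
    primU β x = genU β x ⊗ₜ[k] 1 + 1 ⊗ₜ[k] genU β x := rfl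

lemma primU_rel : ∀ ⦃s t⦄, relLeib k V β s t →
    TensorAlgebra.lift k (primU β) s = TensorAlgebra.lift k (primU β) t := by
  rintro _ _ ⟨x, y, rfl, rfl⟩
  simp only [map_add, map_mul, TensorAlgebra.lift_ι_apply, primU_apply,
    genU_comm β x y]
  simp only [add_mul, mul_add, Algebra.TensorProduct.tmul_mul_tmul, one_mul,
    mul_one, TensorProduct.sub_tmul, TensorProduct.tmul_sub]
  abel

/-- the coproduct of `U(C)` -/
noncomputable def dUmap : RingQuot (relLeib k V β) →ₐ[k]
    RingQuot (relLeib k V β) ⊗[k] RingQuot (relLeib k V β) :=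
  RingQuot.liftAlgHom k ⟨TensorAlgebra.lift k (primU β), primU_rel β⟩

lemma dUmap_gen (x : V) :
    dUmap β (RingQuot.mkAlgHom k (relLeib k V β) (TensorAlgebra.ι k x)) =
      genU β x ⊗ₜ[k] 1 + 1 ⊗ₜ[k] genU β x := by
  rw [dUmap, RingQuot.liftAlgHom_mkAlgHom_apply, TensorAlgebra.lift_ι_apply,
    primU_apply]

/-- the primitive coproduct generator map on `U(𝔥_Lie)` -/
noncomputable def primE : (V ⧸ leibnizIdeal k V β) →ₗ[k]
    (RingQuot (relLie β) ⊗[k] RingQuot (relLie β)) :=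
  ((TensorProduct.mk k _ _).flip 1) ∘ₗ genE β +
    (TensorProduct.mk k _ _ 1) ∘ₗ genE β

lemma primE_apply (q : V ⧸ leibnizIdeal k V β) :
    primE β q = genE β q ⊗ₜ[k] 1 + 1 ⊗ₜ[k] genE β q := rfl

lemma primE_rel : ∀ ⦃s t⦄, relLie β s t →
    TensorAlgebra.lift k (primE β) s = TensorAlgebra.lift k (primE β) t := by
  rintro _ _ ⟨q, r, rfl, rfl⟩
  simp only [map_sub, map_mul, TensorAlgebra.lift_ι_apply, primE_apply,
    genE_comm β q r]
  simp only [add_mul, mul_add, Algebra.TensorProduct.tmul_mul_tmul, one_mul,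
    mul_one, TensorProduct.sub_tmul, TensorProduct.tmul_sub]
  abel

/-- the coproduct of `U(𝔥_Lie)` -/
noncomputable def dEmap : RingQuot (relLie β) →ₐ[k]
    RingQuot (relLie β) ⊗[k] RingQuot (relLie β) :=
  RingQuot.liftAlgHom k ⟨TensorAlgebra.lift k (primE β), primE_rel β⟩

lemma dEmap_gen (q : V ⧸ leibnizIdeal k V β) :
    dEmap β (RingQuot.mkAlgHom k (relLie β) (TensorAlgebra.ι k q)) =
      genE β q ⊗ₜ[k] 1 + 1 ⊗ₜ[k] genE β q := by
  rw [dEmap, RingQuot.liftAlgHom_mkAlgHom_apply, TensorAlgebra.lift_ι_apply,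
    primE_apply]

lemma intertwine :
    (Algebra.TensorProduct.map (fwd β) (fwd β)).comp (dUmap β) =
      (dEmap β).comp (fwd β) := by
  apply RingQuot.ringQuot_ext'
  apply TensorAlgebra.hom_ext
  refine LinearMap.ext fun x => ?_
  simp only [LinearMap.comp_apply, AlgHom.toLinearMap_apply, AlgHom.comp_apply]
  rw [dUmap_gen, genU_apply, fwd_gen, dEmap_gen]
  simp only [map_add, Algebra.TensorProduct.map_tmul, map_one]
  rw [fwd_gen, ← genE_apply]

end Aux

/-- for a right Leibniz algebra `𝔥`, the universal enveloping
algebra `U(C) = T(𝔥)/⟨[x,y] + y.x − x.y⟩` of the associated rack bialgebra is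
isomorphic as a bialgebra to the universal enveloping algebra of the Lie
algebra `𝔥_Lie = 𝔥/⟨[x,x]⟩` (presented as `T(𝔥_Lie)/⟨x.y − y.x − [x,y]⟩`),
both with their generators primitive; in particular `J` contains all squares
`[x,x]`. -/
theorem UC_of_leibniz_is_enveloping_of_lie (β : V →ₗ[k] V →ₗ[k] V)
    (leibniz : ∀ x y z : V, β (β x y) z = β (β x z) y + β x (β y z)) :
    -- the ideal `J` contains all squares `[x,x]`
    (∀ x : V, RingQuot.mkAlgHom k (relLeib k V β)
      (TensorAlgebra.ι k (β x x)) = 0) ∧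
    -- the bracket descends to a Lie algebra structure on `𝔥_Lie = 𝔥/I`
    ∃ βQ : (V ⧸ leibnizIdeal k V β) →ₗ[k] (V ⧸ leibnizIdeal k V β) →ₗ[k]
        (V ⧸ leibnizIdeal k V β),
      (∀ x y : V, βQ (Submodule.Quotient.mk x) (Submodule.Quotient.mk y) =
        Submodule.Quotient.mk (β x y)) ∧
      (∀ q : V ⧸ leibnizIdeal k V β, βQ q q = 0) ∧
      (∀ q r s : V ⧸ leibnizIdeal k V β,
        βQ (βQ q r) s = βQ (βQ q s) r + βQ q (βQ r s)) ∧
      -- `U(C)` is isomorphic, as a bialgebra, to `U(𝔥_Lie)`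
      ∃ e : RingQuot (relLeib k V β) ≃ₐ[k]
          RingQuot (fun s t : TensorAlgebra k (V ⧸ leibnizIdeal k V β) =>
            ∃ q r : V ⧸ leibnizIdeal k V β,
              s = TensorAlgebra.ι k (βQ q r) ∧
              t = TensorAlgebra.ι k q * TensorAlgebra.ι k r -
                TensorAlgebra.ι k r * TensorAlgebra.ι k q),
        -- `e` matches the canonical generators
        (∀ x : V, e (RingQuot.mkAlgHom k (relLeib k V β)
            (TensorAlgebra.ι k x)) =
          RingQuot.mkAlgHom k _ (TensorAlgebra.ι k
            (Submodule.Quotient.mk (p := leibnizIdeal k V β) x))) ∧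
        -- `e` intertwines the coproducts which make the generators primitive
        ∃ (dU : RingQuot (relLeib k V β) →ₐ[k]
              RingQuot (relLeib k V β) ⊗[k] RingQuot (relLeib k V β))
          (dE : RingQuot (fun s t : TensorAlgebra k (V ⧸ leibnizIdeal k V β) =>
              ∃ q r : V ⧸ leibnizIdeal k V β,
                s = TensorAlgebra.ι k (βQ q r) ∧
                t = TensorAlgebra.ι k q * TensorAlgebra.ι k r -
                  TensorAlgebra.ι k r * TensorAlgebra.ι k q) →ₐ[k] _),
          (∀ x : V, dU (RingQuot.mkAlgHom k (relLeib k V β)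
              (TensorAlgebra.ι k x)) =
            RingQuot.mkAlgHom k (relLeib k V β) (TensorAlgebra.ι k x) ⊗ₜ[k] 1 +
            1 ⊗ₜ[k] RingQuot.mkAlgHom k (relLeib k V β)
              (TensorAlgebra.ι k x)) ∧
          (∀ q : V ⧸ leibnizIdeal k V β, dE (RingQuot.mkAlgHom k _
              (TensorAlgebra.ι k q)) =
            RingQuot.mkAlgHom k _ (TensorAlgebra.ι k q) ⊗ₜ[k] 1 +
            1 ⊗ₜ[k] RingQuot.mkAlgHom k _ (TensorAlgebra.ι k q)) ∧
          (TensorProduct.map e.toLinearMap e.toLinearMap ∘ₗ dU.toLinearMap =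
            dE.toLinearMap ∘ₗ e.toLinearMap) := by
  refine ⟨fun x => ?_, betaQ β, betaQ_mk β, fun q => ?_, fun q r s => ?_,
    equivE β, fun x => ?_, dUmap β, dEmap β, fun x => ?_, fun q => ?_, ?_⟩
  · rw [← genU_apply]; exact genU_sq β x
  · obtain ⟨x, rfl⟩ := Submodule.Quotient.mk_surjective _ q
    rw [betaQ_mk, Submodule.Quotient.mk_eq_zero]
    exact sq_mem β x
  · obtain ⟨x, rfl⟩ := Submodule.Quotient.mk_surjective _ q
    obtain ⟨y, rfl⟩ := Submodule.Quotient.mk_surjective _ r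
    obtain ⟨z, rfl⟩ := Submodule.Quotient.mk_surjective _ s
    simp only [betaQ_mk]
    rw [leibniz x y z]
    exact Submodule.Quotient.mk_add _
  · exact fwd_gen β x
  · rw [dUmap_gen, genU_apply]
  · rw [dEmap_gen, genE_apply]
  · have h2 : TensorProduct.map (equivE β).toLinearMap (equivE β).toLinearMap =
        (Algebra.TensorProduct.map (fwd β) (fwd β)).toLinearMap :=
      TensorProduct.ext' fun a b => rfl
    rw [h2, ← AlgHom.comp_toLinearMap, intertwine β, AlgHom.comp_toLinearMap]
    rfl
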